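/- arXiv:2205.01598 — 4 statements merged into one kernel-verified Lean document; each statement's English description precedes it below -/
import Mathlib

section
/- Level-based dependency of matrix powers: let u be a vertex with dist_{G_A}(r,u) = i where i ≥ 1, and let p ∈ ℕ. If the vector y : n → R satisfies y v = ((A^p) *ᵥ x) v for every vertex v whose distance from r is i−1, i, or i+1, then (A *ᵥ y) u = ((A^(p+1)) *ᵥ x) u. -/
open Matrix
/-- The adjacency graph `G_A` of a symmetric square matrix `A`:
vertices are the indices, and `u` is adjacent to `v` iff `u ≠ v` and `A u v ≠ 0`. -/
def Matrix.adjGraph {R : Type*} [CommRing R] {n : Type*}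
    (A : Matrix n n R) (hA : Aᵀ = A) : SimpleGraph n where
  Adj u v := u ≠ v ∧ A u v ≠ 0
  symm := by
    constructor
    intro u v h
    refine ⟨h.1.symm, fun hz => h.2 ?_⟩
    rw [← hA, Matrix.transpose_apply]
    exact hz
  loopless := ⟨fun u h => h.1 rfl⟩

theorem Matrix.mulVec_apply_congr {R m n : Type*} [NonUnitalNonAssocSemiring R] [Fintype n]
    (A : Matrix m n R) {y z : n → R} (u : m) (h : ∀ v, A u v ≠ 0 → y v = z v) :
    (A *ᵥ y) u = (A *ᵥ z) u := by
  refine Finset.sum_congr rfl fun v _ => ?_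
  by_cases hAv : A u v = 0
  · simp [hAv]
  · rw [h v hAv]

theorem Matrix.adjGraph_dist_of_apply_ne_zero {R n : Type*} [CommRing R]
    {A : Matrix n n R} (hA : Aᵀ = A) {u v : n} (huv : A u v ≠ 0) (r : n) :
    (A.adjGraph hA).dist r v = (A.adjGraph hA).dist r u - 1 ∨
      (A.adjGraph hA).dist r v = (A.adjGraph hA).dist r u ∨
      (A.adjGraph hA).dist r v = (A.adjGraph hA).dist r u + 1 := by
  obtain rfl | hne := eq_or_ne u v
  · exact .inr (.inl rfl)
  · have hadj : (A.adjGraph hA).Adj u v := ⟨hne, huv⟩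
    rcases hadj.diff_dist_adj (u := r) with h | h | h <;> simp [h]

theorem level_based_power_dependency_general
    {R : Type*} [CommRing R] {n : Type*} [Fintype n] [DecidableEq n]
    (A : Matrix n n R) (hA : Aᵀ = A)
    (r : n)
    (u : n) (i : ℕ) (hu : (A.adjGraph hA).dist r u = i)
    (p : ℕ) (x y : n → R)
    (hy : ∀ v : n,
      ((A.adjGraph hA).dist r v = i - 1 ∨ (A.adjGraph hA).dist r v = i ∨
        (A.adjGraph hA).dist r v = i + 1) →
      y v = (A ^ p).mulVec x v) :
    A.mulVec y u = (A ^ (p + 1)).mulVec x u := by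
  rw [pow_succ', ← mulVec_mulVec]
  refine A.mulVec_apply_congr u fun v huv => hy v ?_
  rw [← hu]
  exact adjGraph_dist_of_apply_ne_zero hA huv r

/-- **Level-based dependency of matrix powers.**
Let `A` be a symmetric square matrix with connected adjacency graph `G_A`, rooted at `r`.
Let `u` be a vertex at BFS distance `i ≥ 1` from `r`. If `y` agrees with `A^p *ᵥ x` on
every vertex at distance `i-1`, `i`, or `i+1` from `r`, then
`(A *ᵥ y) u = (A^(p+1) *ᵥ x) u`. -/
theorem level_based_power_dependency
    {R : Type*} [CommRing R] {n : Type*} [Fintype n] [DecidableEq n]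
    (A : Matrix n n R) (hA : Aᵀ = A)
    (hconn : (A.adjGraph hA).Connected) (r : n)
    (u : n) (i : ℕ) (hi : 1 ≤ i) (hu : (A.adjGraph hA).dist r u = i)
    (p : ℕ) (x y : n → R)
    (hy : ∀ v : n,
      ((A.adjGraph hA).dist r v = i - 1 ∨ (A.adjGraph hA).dist r v = i ∨
        (A.adjGraph hA).dist r v = i + 1) →
      y v = (A ^ p).mulVec x v) :
    A.mulVec y u = (A ^ (p + 1)).mulVec x u :=
  level_based_power_dependency_general A hA r u i hu p x y hy
end

section
/- Steady-state reuse distance equals p_m + 1: if (i,p) ∈ D satisfies p + 1 ≤ p_m, p_m ≤ i + p, and i + p + 1 ≤ L_m, then rank(i, p+1) = rank(i, p) + p_m + 1. -/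
/-- The `Lp` diagram: nodes `(i, p)` with `i ≤ L_m - 1` and `1 ≤ p ≤ p_m`. -/
def LpDiagram (Lm pm : ℕ) : Set (ℕ × ℕ) :=
  {q | q.1 ≤ Lm - 1 ∧ 1 ≤ q.2 ∧ q.2 ≤ pm}

/-- The diagonal execution order on the `Lp` diagram: `(i,p) ≺ (i',p')` iff
`i + p < i' + p'`, or `i + p = i' + p'` and `p < p'`. -/
def diagPrec (q q' : ℕ × ℕ) : Prop :=
  q.1 + q.2 < q'.1 + q'.2 ∨ (q.1 + q.2 = q'.1 + q'.2 ∧ q.2 < q'.2)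

/-- The rank of a node in the diagonal traversal: the number of nodes of the `Lp`
diagram strictly preceding it in the diagonal execution order. -/
noncomputable def diagRank (Lm pm : ℕ) (q : ℕ × ℕ) : ℕ :=
  Set.ncard {q' ∈ LpDiagram Lm pm | diagPrec q' q}

/-- **Steady-state reuse distance equals `p_m + 1`.**
If `(i, p)` is a node of the `Lp` diagram with `p + 1 ≤ p_m`, `p_m ≤ i + p`, and
`i + p + 1 ≤ L_m` (i.e. away from the wind-up and wind-down phases), then the node
`(i, p+1)` is executed exactly `p_m + 1` steps after `(i, p)`. -/
theorem diag_rank_steady_state_reuse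
    (Lm pm : ℕ) (hLm : 1 ≤ Lm) (hpm : 1 ≤ pm)
    (i p : ℕ) (hD : (i, p) ∈ LpDiagram Lm pm)
    (hp : p + 1 ≤ pm) (hlow : pm ≤ i + p) (hhigh : i + p + 1 ≤ Lm) :
    diagRank Lm pm (i, p + 1) = diagRank Lm pm (i, p) + pm + 1 := by
  classical
  obtain ⟨hi, hp1, hp2⟩ := hD
  set A := {q' ∈ LpDiagram Lm pm | diagPrec q' (i, p)} with hA
  set B := {q' ∈ LpDiagram Lm pm | diagPrec q' (i, p + 1)} with hB
  have hfinB : B.Finite := by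
    apply Set.Finite.subset (Set.finite_Icc ((0 : ℕ), (0 : ℕ)) (Lm, pm))
    rintro ⟨a, b⟩ ⟨⟨h1, h2, h3⟩, -⟩
    exact ⟨⟨Nat.zero_le _, Nat.zero_le _⟩, ⟨by omega, h3⟩⟩
  have hsub : A ⊆ B := by
    rintro ⟨a, b⟩ ⟨hmem, hprec⟩
    refine ⟨hmem, ?_⟩
    simp only [diagPrec] at hprec ⊢
    omega
  -- the extra set of nodes between `(i,p)` (inclusive) and `(i,p+1)` (exclusive)
  set f : ℕ → ℕ × ℕ := fun j =>
    if j + p ≤ pm then (i - j, p + j) else (i + 1 + pm - j, j + p - pm) with hf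
  have hE : B \ A = f '' Set.Icc 0 pm := by
    ext ⟨a, b⟩
    simp only [Set.mem_diff, hA, hB, Set.mem_setOf_eq, LpDiagram, diagPrec, Set.mem_image,
      Set.mem_Icc, hf]
    constructor
    · rintro ⟨⟨⟨h1, h2, h3⟩, h4⟩, h5⟩
      have h6 : ¬(a + b < i + p ∨ (a + b = i + p ∧ b < p)) := fun hc => h5 ⟨⟨h1, h2, h3⟩, hc⟩
      refine ⟨if a + b = i + p then b - p else pm + b - p, by split_ifs <;> omega, ?_⟩
      split_ifs <;> simp only [Prod.mk.injEq] <;> omega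
    · rintro ⟨j, ⟨-, hj⟩, hfj⟩
      split_ifs at hfj <;> rw [Prod.mk.injEq] at hfj <;>
        obtain ⟨ha, hb⟩ := hfj
      · constructor
        · exact ⟨⟨by omega, by omega, by omega⟩, by omega⟩
        · rintro ⟨-, hc | hc⟩ <;> omega
      · constructor
        · exact ⟨⟨by omega, by omega, by omega⟩, by omega⟩
        · rintro ⟨-, hc | hc⟩ <;> omega
  have hinj : Set.InjOn f (Set.Icc 0 pm) := by
    intro j1 hj1 j2 hj2 h
    simp only [Set.mem_Icc] at hj1 hj2
    simp only [hf] at h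
    split_ifs at h <;> rw [Prod.mk.injEq] at h <;> omega
  have hcardE : (B \ A).ncard = pm + 1 := by
    rw [hE, Set.ncard_image_of_injOn hinj]
    simp [Set.ncard_eq_toFinset_card', Set.toFinset_Icc]
  have hfinA : A.Finite := hfinB.subset hsub
  have hfinE : (B \ A).Finite := hfinB.subset Set.diff_subset
  have hunion : B = A ∪ (B \ A) := (Set.union_diff_cancel hsub).symm
  show B.ncard = A.ncard + pm + 1
  rw [hunion, Set.ncard_union_eq Set.disjoint_sdiff_right hfinA hfinE, hcardE]
  ring
end

section
/- Maximum reuse distance bound: for every (i,p) ∈ D with p + 1 ≤ p_m, one has rank(i, p+1) ≤ rank(i, p) + p_m + 1; i.e., in the diagonal traversal a level is revisited for the next power after at most p_m + 1 execution steps. -/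
lemma LpDiagram_finite (Lm pm : ℕ) : (LpDiagram Lm pm).Finite := by
  apply Set.Finite.subset ((Set.finite_Iic (Lm - 1)).prod (Set.finite_Icc 1 pm))
  rintro ⟨a, b⟩ ⟨h1, h2, h3⟩
  exact ⟨h1, h2, h3⟩

/-- **Maximum reuse distance bound.**
For every node `(i, p)` of the `Lp` diagram with `p + 1 ≤ p_m`, the node `(i, p+1)` is
executed at most `p_m + 1` steps after `(i, p)`: in the diagonal traversal a level is
revisited for the next power after at most `p_m + 1` execution steps. -/
theorem diag_rank_reuse_distance_bound
    (Lm pm : ℕ) (hLm : 1 ≤ Lm) (hpm : 1 ≤ pm)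
    (i p : ℕ) (hD : (i, p) ∈ LpDiagram Lm pm) (hp : p + 1 ≤ pm) :
    diagRank Lm pm (i, p + 1) ≤ diagRank Lm pm (i, p) + pm + 1 := by
  obtain ⟨hi, hp1, hppm⟩ := hD
  set S : Set (ℕ × ℕ) := {q' ∈ LpDiagram Lm pm | diagPrec q' (i, p)} with hS
  set S' : Set (ℕ × ℕ) := {q' ∈ LpDiagram Lm pm | diagPrec q' (i, p + 1)} with hS'
  set T1 : Set (ℕ × ℕ) := (fun t => (i + p - t, t)) '' Set.Icc p pm with hT1
  set T2 : Set (ℕ × ℕ) := (fun t => (i + p + 1 - t, t)) '' Set.Icc 1 p with hT2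
  have hSfin : S.Finite := (LpDiagram_finite Lm pm).subset (fun q hq => hq.1)
  have hT1fin : T1.Finite := (Set.finite_Icc p pm).image _
  have hT2fin : T2.Finite := (Set.finite_Icc 1 p).image _
  have hsub : S' ⊆ S ∪ T1 ∪ T2 := by
    rintro ⟨a, b⟩ ⟨hmem, hprec⟩
    simp only [diagPrec] at hprec
    obtain ⟨ha, hb1, hb2⟩ := hmem
    rcases hprec with h | ⟨heq, hlt⟩
    · -- a + b < i + p + 1, i.e. a + b ≤ i + p
      have h' : a + b ≤ i + p := Nat.lt_succ_iff.mp h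
      rcases lt_or_eq_of_le h' with h'' | h''
      · exact Or.inl (Or.inl ⟨⟨ha, hb1, hb2⟩, Or.inl h''⟩)
      · rcases lt_or_ge b p with hb | hb
        · exact Or.inl (Or.inl ⟨⟨ha, hb1, hb2⟩, Or.inr ⟨h'', hb⟩⟩)
        · refine Or.inl (Or.inr ⟨b, ⟨hb, hb2⟩, ?_⟩)
          simp only [Prod.mk.injEq]
          exact ⟨by omega, trivial⟩
    · -- a + b = i + p + 1 and b < p + 1
      refine Or.inr ⟨b, ⟨hb1, Nat.lt_succ_iff.mp hlt⟩, ?_⟩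
      simp only [Prod.mk.injEq]
      exact ⟨by omega, trivial⟩
  have hcard1 : T1.ncard ≤ pm - p + 1 := by
    calc T1.ncard ≤ (Set.Icc p pm).ncard := Set.ncard_image_le (Set.finite_Icc p pm)
    _ = pm - p + 1 := by
        rw [← Finset.coe_Icc, Set.ncard_coe_finset, Nat.card_Icc]
        omega
  have hcard2 : T2.ncard ≤ p := by
    calc T2.ncard ≤ (Set.Icc 1 p).ncard := Set.ncard_image_le (Set.finite_Icc 1 p)
    _ = p := by
        rw [← Finset.coe_Icc, Set.ncard_coe_finset, Nat.card_Icc]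
        omega
  have h1 : diagRank Lm pm (i, p + 1) = S'.ncard := rfl
  have h2 : diagRank Lm pm (i, p) = S.ncard := rfl
  rw [h1, h2]
  calc S'.ncard ≤ (S ∪ T1 ∪ T2).ncard :=
        Set.ncard_le_ncard hsub (((hSfin.union hT1fin).union hT2fin))
    _ ≤ (S ∪ T1).ncard + T2.ncard := Set.ncard_union_le _ _
    _ ≤ S.ncard + T1.ncard + T2.ncard := by
        have := Set.ncard_union_le S T1
        omega
    _ ≤ S.ncard + pm + 1 := by omega
end

section
/- BFS reordering bounds the matrix bandwidth by three consecutive level sizes: let φ be a level-consistent bijective numbering of the vertices by {0, …, N−1} (N = |n|), meaning dist_{G_A}(r,u) < dist_{G_A}(r,v) implies φ(u) < φ(v). Then for all vertices u ≠ v with A u v ≠ 0 and i = dist_{G_A}(r,u) ≥ 1, one has |φ(u) − φ(v)| < |L(i−1)| + |L(i)| + |L(i+1)|, where L(j) = {w : dist_{G_A}(r,w) = j}. -/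
open Matrix

/-!
A level-consistent numbering can only place a vertex between `φ u` and `φ v` if its level lies
between the levels of `u` and `v`. Adjacent vertices have levels differing by at most one, so the
`|φ u - φ v| + 1` vertices numbered from `φ u` to `φ v` all lie in `L(i-1) ∪ L(i) ∪ L(i+1)`.
-/

theorem mem_uIcc_of_map_mem_uIcc {V α β : Type*} [LinearOrder α] [LinearOrder β]
    {f : V → α} {φ : V → β} (hφ : ∀ u v, f u < f v → φ u < φ v) {u v w : V}
    (hw : φ w ∈ Set.uIcc (φ u) (φ v)) : f w ∈ Set.uIcc (f u) (f v) := by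
  obtain ⟨hlo, hhi⟩ := hw
  constructor
  · by_contra! h
    rw [lt_inf_iff] at h
    exact (lt_inf_iff.mpr ⟨hφ _ _ h.1, hφ _ _ h.2⟩).not_ge hlo
  · by_contra! h
    rw [sup_lt_iff] at h
    exact (sup_lt_iff.mpr ⟨hφ _ _ h.1, hφ _ _ h.2⟩).not_ge hhi

theorem Equiv.ncard_preimage_uIcc {V : Type*} {N : ℕ} (φ : V ≃ Fin N) (a b : Fin N) :
    ((φ ⁻¹' Set.uIcc a b).ncard : ℤ) = |((a : ℕ) : ℤ) - ((b : ℕ) : ℤ)| + 1 := by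
  rw [Set.ncard_preimage_of_injective_subset_range φ.injective (by simp), ← Finset.coe_uIcc,
    Set.ncard_coe_finset, Fin.card_uIcc]
  push_cast
  rw [abs_sub_comm]

theorem SimpleGraph.Adj.uIcc_dist_subset_Icc {V : Type*} {G : SimpleGraph V} {u v : V}
    (h : G.Adj u v) (r : V) :
    Set.uIcc (G.dist r u) (G.dist r v) ⊆ Set.Icc (G.dist r u - 1) (G.dist r u + 1) := by
  apply Set.uIcc_subset_Icc <;> rw [Set.mem_Icc] <;>
    rcases h.diff_dist_adj (u := r) with h | h | h <;> omega

theorem ncard_preimage_Icc_pred_succ_le {V : Type*} [Finite V] (f : V → ℕ) (i : ℕ) :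
    (f ⁻¹' Set.Icc (i - 1) (i + 1)).ncard ≤
      {w | f w = i - 1}.ncard + {w | f w = i}.ncard + {w | f w = i + 1}.ncard := by
  have hcover : f ⁻¹' Set.Icc (i - 1) (i + 1) ⊆
      {w | f w = i - 1} ∪ {w | f w = i} ∪ {w | f w = i + 1} := by
    intro w hw
    simp only [Set.mem_preimage, Set.mem_Icc] at hw
    simp only [Set.mem_union, Set.mem_ofPred_eq]
    omega
  calc _ ≤ ({w | f w = i - 1} ∪ {w | f w = i} ∪ {w | f w = i + 1}).ncard :=
        Set.ncard_le_ncard hcover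
    _ ≤ ({w | f w = i - 1} ∪ {w | f w = i}).ncard + {w | f w = i + 1}.ncard :=
        Set.ncard_union_le _ _
    _ ≤ _ := Nat.add_le_add_right (Set.ncard_union_le _ _) _

theorem bfs_numbering_bandwidth_bound_general
    {R : Type*} [CommRing R] {n : Type*} [Fintype n]
    (A : Matrix n n R) (hA : Aᵀ = A) (r : n)
    (φ : n ≃ Fin (Fintype.card n))
    (hφ : ∀ u v : n, (A.adjGraph hA).dist r u < (A.adjGraph hA).dist r v →
      (φ u : ℕ) < (φ v : ℕ))
    (u v : n) (huv : u ≠ v) (hAuv : A u v ≠ 0)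
    (i : ℕ) (hi : (A.adjGraph hA).dist r u = i) :
    |((φ u : ℕ) : ℤ) - ((φ v : ℕ) : ℤ)| <
      ({w : n | (A.adjGraph hA).dist r w = i - 1}.ncard : ℤ) +
      ({w : n | (A.adjGraph hA).dist r w = i}.ncard : ℤ) +
      ({w : n | (A.adjGraph hA).dist r w = i + 1}.ncard : ℤ) := by
  set G := A.adjGraph hA
  have hadj : G.Adj u v := ⟨huv, hAuv⟩
  have hφ' : ∀ u v, G.dist r u < G.dist r v → φ u < φ v :=
    fun x y h => Fin.lt_def.mpr (hφ x y h)
  have hwindow : φ ⁻¹' Set.uIcc (φ u) (φ v) ⊆ G.dist r ⁻¹' Set.Icc (i - 1) (i + 1) :=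
    fun w hw => hi ▸ hadj.uIcc_dist_subset_Icc r (mem_uIcc_of_map_mem_uIcc hφ' hw)
  calc |((φ u : ℕ) : ℤ) - ((φ v : ℕ) : ℤ)|
      < ((φ ⁻¹' Set.uIcc (φ u) (φ v)).ncard : ℤ) := by
        rw [φ.ncard_preimage_uIcc]; exact lt_add_one _
    _ ≤ _ := by
        exact_mod_cast (Set.ncard_le_ncard hwindow).trans
          (ncard_preimage_Icc_pred_succ_le (G.dist r) i)

/-- **BFS reordering bounds the matrix bandwidth by three consecutive level sizes.**
Let `A` be a symmetric square matrix with connected adjacency graph `G_A` rooted at `r`,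
and let `φ` be a bijective numbering of the vertices by `{0, …, N-1}` (`N = |n|`) that
is level-consistent: vertices at smaller BFS distance from `r` receive smaller numbers.
Then for all distinct vertices `u ≠ v` with `A u v ≠ 0` and `i = dist(r, u) ≥ 1`,
`|φ(u) - φ(v)| < |L(i-1)| + |L(i)| + |L(i+1)|`,
where `L j = {w : dist(r, w) = j}` are the BFS levels. -/
theorem bfs_numbering_bandwidth_bound
    {R : Type*} [CommRing R] {n : Type*} [Fintype n] [DecidableEq n]
    (A : Matrix n n R) (hA : Aᵀ = A)
    (hconn : (A.adjGraph hA).Connected) (r : n)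
    (φ : n ≃ Fin (Fintype.card n))
    (hφ : ∀ u v : n, (A.adjGraph hA).dist r u < (A.adjGraph hA).dist r v →
      (φ u : ℕ) < (φ v : ℕ))
    (u v : n) (huv : u ≠ v) (hAuv : A u v ≠ 0)
    (i : ℕ) (hi : (A.adjGraph hA).dist r u = i) (hi1 : 1 ≤ i) :
    |((φ u : ℕ) : ℤ) - ((φ v : ℕ) : ℤ)| <
      ({w : n | (A.adjGraph hA).dist r w = i - 1}.ncard : ℤ) +
      ({w : n | (A.adjGraph hA).dist r w = i}.ncard : ℤ) +
      ({w : n | (A.adjGraph hA).dist r w = i + 1}.ncard : ℤ) :=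
  bfs_numbering_bandwidth_bound_general A hA r φ hφ u v huv hAuv i hi
end
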